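/- arXiv:math/0606222 — 2 statements merged into one kernel-verified Lean document; each statement's English description precedes it below -/
import Mathlib

section
/- For 0 \leq r \leq n, the specialization \lambda = \omega_r = (1^r, 0^{n-r}) of the p-adic generalized dimension formula holds: a^{-r} t^{r(r+1-2n)} \prod_{i=1}^r v_i \prod_{1\le j<k\le r} W_{jk} \prod_{j=1}^r \prod_{k=r+1}^n w^+_{jk} w^-_{jk} = \frac{(t^{n+1-r}; t)_r (a t^{n-r}; t)_r (ab t^{2n-r}; t)_r}{(t;t)_r (b t^{n-r}; t)_r (ab t^{n-r-1}; t)_r} \cdot \frac{1 - ab t^{2n-2r-1}}{1 - ab t^{2n-1}} \cdot a^{-r} t^{r(r+1-2n)}, where v_i = ((1-at^{n-i})/(1-bt^{n-i})) t^{i-n}, W_{jk} = t(1 - ab t^{2n-j-k+1})/(1 - ab t^{2n-j-k-1}), w^+_{jk} = t(1-ab t^{2n-j-k})/(1-ab t^{2n-j-k-1}), w^-_{jk} = (1-t^{k-j+1})/(1-t^{k-j}). -/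
/-- The q-Pochhammer symbol `(x;t)_m = ∏_{i=0}^{m-1} (1 - x t^i)`. -/
noncomputable def qPoch {F : Type*} [Field F] (x t : F) (m : ℕ) : F :=
  ∏ i ∈ Finset.range m, (1 - x * t ^ i)

open Finset

section Helpers
variable {F : Type*} [Field F] (a b t : F)

lemma prod_argZ (g : ℤ → F) {s : Finset ℕ} {f1 f2 : ℕ → ℤ}
    (h : ∀ i ∈ s, f1 i = f2 i) : ∏ i ∈ s, g (f1 i) = ∏ i ∈ s, g (f2 i) :=
  Finset.prod_congr rfl fun i hi => by rw [h i hi]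

lemma prod_argN (g : ℕ → F) {s : Finset ℕ} {f1 f2 : ℕ → ℕ}
    (h : ∀ i ∈ s, f1 i = f2 i) : ∏ i ∈ s, g (f1 i) = ∏ i ∈ s, g (f2 i) :=
  Finset.prod_congr rfl fun i hi => by rw [h i hi]

lemma Licc_nat (f : ℕ → F) (n : ℕ) : ∀ r, r ≤ n →
    ∏ j ∈ Icc 1 r, f (n - j) = ∏ i ∈ range r, f (n - r + i) := by
  intro r
  induction r with
  | zero => simp
  | succ r ih =>
    intro h
    rw [Finset.prod_Icc_succ_top (by omega), ih (by omega), Finset.prod_range_succ']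
    congr 1
    exact prod_argN f fun i hi => by have := Finset.mem_range.mp hi; omega

lemma Licc_int (g : ℤ → F) (c : ℤ) (r : ℕ) :
    ∏ j ∈ Icc 1 r, g (c - j) = ∏ i ∈ range r, g (c - r + i) := by
  induction r with
  | zero => simp
  | succ r ih =>
    rw [Finset.prod_Icc_succ_top (by omega), ih, Finset.prod_range_succ']
    congr 1
    · exact prod_argZ g fun i _ => by push_cast; ring
    · congr 1; push_cast; ring

lemma Lshift (g : ℤ → F) (c : ℤ) (r : ℕ) :
    (∏ i ∈ range r, g (c + i)) * g (c + r) = g c * ∏ i ∈ range r, g (c + 1 + i) := by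
  rw [← Finset.prod_range_succ (fun i => g (c + i)) r, Finset.prod_range_succ', mul_comm]
  congr 1
  · congr 1; push_cast; ring
  · exact prod_argZ g fun i _ => by push_cast; ring

lemma Ltel (g : ℤ → F) (c : ℤ) (r : ℕ) :
    (∏ i ∈ range (r + r), g (c + i)) * g (c + r + r) =
      g c * (∏ i ∈ range r, g (c + 1 + i)) * ∏ i ∈ range r, g (c + r + 1 + i) := by
  rw [Finset.prod_range_add]
  rw [show (∏ i ∈ range r, g (c + ↑(r + i))) = ∏ i ∈ range r, g (c + r + i) from
    prod_argZ g fun i _ => by push_cast; ring]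
  rw [mul_assoc, Lshift g (c + r) r, ← mul_assoc, Lshift g c r]

lemma Lpair (g : ℤ → F) (c : ℤ) : ∀ r : ℕ,
    ∏ j ∈ Icc 1 r, g (c - 2*j) * g (c - 2*j - 1) = ∏ i ∈ range (r + r), g (c - r - r - 1 + i) := by
  intro r
  induction r with
  | zero => simp
  | succ r ih =>
    rw [Finset.prod_Icc_succ_top (by omega), ih,
      show r + 1 + (r + 1) = r + r + 1 + 1 by omega,
      Finset.prod_range_succ', Finset.prod_range_succ']
    rw [show (∏ i ∈ range (r + r), g (c - ↑(r+1) - ↑(r+1) - 1 + ↑(i + 1 + 1)))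
        = ∏ i ∈ range (r + r), g (c - r - r - 1 + i) from
      prod_argZ g fun i _ => by push_cast; ring]
    rw [show ((c - ((r+1 : ℕ) : ℤ) - ((r+1 : ℕ) : ℤ) - 1 + ((0 + 1 : ℕ) : ℤ))) = c - 2*((r+1 : ℕ) : ℤ) by
      push_cast; ring]
    rw [show ((c - ((r+1 : ℕ) : ℤ) - ((r+1 : ℕ) : ℤ) - 1 + ((0 : ℕ) : ℤ))) = c - 2*((r+1 : ℕ) : ℤ) - 1 by
      push_cast; ring]
    ring

lemma inner2 (hab : ∀ m : ℤ, (1 : F) - a * b * t ^ m ≠ 0) (d : ℤ) (s : ℕ) :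
    ∀ e, s ≤ e →
    ∏ k ∈ Icc (s+1) e, t * (1 - a*b*t^(d - k + 1)) / (1 - a*b*t^(d - k - 1)) =
      t^(e - s) * ((1 - a*b*t^(d - s)) * (1 - a*b*t^(d - s - 1))) /
        ((1 - a*b*t^(d - e)) * (1 - a*b*t^(d - e - 1))) := by
  intro e he
  induction e, he using Nat.le_induction with
  | base =>
    rw [Finset.Icc_eq_empty (by omega), Finset.prod_empty, Nat.sub_self, pow_zero, one_mul,
      div_self (mul_ne_zero (hab _) (hab _))]
  | succ e he ih =>
    rw [Finset.prod_Icc_succ_top (by omega), ih,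
      show e + 1 - s = (e - s) + 1 by omega, pow_succ]
    have h1 := hab (d - e)
    have h2 := hab (d - e - 1)
    have h3 := hab (d - (e+1 : ℕ))
    have h4 := hab (d - (e+1 : ℕ) - 1)
    have h5 := hab (d - (e+1 : ℕ) + 1)
    push_cast at *
    field_simp
    ring

lemma inner3 (hab : ∀ m : ℤ, (1 : F) - a * b * t ^ m ≠ 0)
    (ht1 : ∀ m : ℕ, 1 ≤ m → (1 : F) - t ^ m ≠ 0) (j : ℕ) (d : ℤ) (s : ℕ) (hjs : j ≤ s) :
    ∀ e, s ≤ e →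
    ∏ k ∈ Icc (s+1) e, (t * (1 - a*b*t^(d - k)) / (1 - a*b*t^(d - k - 1))) *
        ((1 - t^(k - j + 1)) / (1 - t^(k - j))) =
      t^(e - s) * ((1 - a*b*t^(d - s - 1)) / (1 - a*b*t^(d - e - 1))) *
        ((1 - t^(e - j + 1)) / (1 - t^(s - j + 1))) := by
  intro e he
  induction e, he using Nat.le_induction with
  | base =>
    rw [Finset.Icc_eq_empty (by omega), Finset.prod_empty, Nat.sub_self, pow_zero, one_mul,
      div_self (hab _), div_self (ht1 _ (by omega)), one_mul]
  | succ e he ih =>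
    rw [Finset.prod_Icc_succ_top (by omega), ih,
      show e + 1 - s = (e - s) + 1 by omega, pow_succ,
      show e + 1 - j = (e - j) + 1 by omega]
    have h1 := hab (d - e - 1)
    have h2 := hab (d - (e+1 : ℕ) - 1)
    have h3 := hab (d - (e+1 : ℕ))
    have h5 := ht1 (e - j + 1) (by omega)
    have h6 := ht1 (s - j + 1) (by omega)
    have h7 := ht1 (e - j + 1 + 1) (by omega)
    push_cast at *
    field_simp
    ring

lemma perterm_abstract (Aa Ab X Y Z W V P Q T1 T2 T3 : F)
    (hAb : Ab ≠ 0) (hZ : Z ≠ 0) (hW : W ≠ 0) (hV : V ≠ 0) (hQ : Q ≠ 0)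
    (hT : T1 * T2 * T3 = 1) :
    (Aa / Ab * T1) * (T2 * (X * Y) / (Z * W)) * (T3 * (W / V) * (P / Q)) =
      Aa * (X * Y) * P / (Ab * Z * V * Q) := by
  field_simp
  linear_combination Aa * X * Y * P * hT

lemma qp_a (n r : ℕ) (hrn : r ≤ n) :
    ∏ j ∈ Icc 1 r, (1 - a * t ^ (n - j)) = qPoch (a * t ^ (n - r)) t r := by
  rw [Licc_nat (fun m => 1 - a * t ^ m) n r hrn]
  unfold qPoch
  exact Finset.prod_congr rfl fun i _ => by rw [pow_add, mul_assoc]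

lemma qp_b (n r : ℕ) (hrn : r ≤ n) :
    ∏ j ∈ Icc 1 r, (1 - b * t ^ (n - j)) = qPoch (b * t ^ (n - r)) t r := by
  rw [Licc_nat (fun m => 1 - b * t ^ m) n r hrn]
  unfold qPoch
  exact Finset.prod_congr rfl fun i _ => by rw [pow_add, mul_assoc]

lemma qp_t1 (n r : ℕ) (hrn : r ≤ n) :
    ∏ j ∈ Icc 1 r, (1 - t ^ (n - j + 1)) = qPoch (t ^ (n + 1 - r)) t r := by
  rw [show (∏ j ∈ Icc 1 r, (1 - t ^ (n - j + 1))) = ∏ j ∈ Icc 1 r, (1 - t ^ (n + 1 - j)) from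
    prod_argN (fun m => 1 - t ^ m) fun j hj => by
      have := (Finset.mem_Icc.mp hj).2; omega]
  rw [Licc_nat (fun m => 1 - t ^ m) (n+1) r (by omega)]
  unfold qPoch
  exact Finset.prod_congr rfl fun i _ => by rw [pow_add]

lemma qp_t2 (r : ℕ) :
    ∏ j ∈ Icc 1 r, (1 - t ^ (r - j + 1)) = qPoch t t r := by
  rw [show (∏ j ∈ Icc 1 r, (1 - t ^ (r - j + 1))) = ∏ j ∈ Icc 1 r, (1 - t ^ (r + 1 - j)) from
    prod_argN (fun m => 1 - t ^ m) fun j hj => by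
      have := (Finset.mem_Icc.mp hj).2; omega]
  rw [Licc_nat (fun m => 1 - t ^ m) (r+1) r (by omega)]
  unfold qPoch
  refine Finset.prod_congr rfl fun i _ => ?_
  rw [show r + 1 - r + i = 1 + i by omega, pow_add, pow_one]

lemma qp_ab1 (ht : t ≠ 0) (n r : ℕ) :
    ∏ j ∈ Icc 1 r, (1 - a * b * t ^ (2*(n:ℤ) - j - n - 1)) =
      qPoch (a * b * t ^ ((n:ℤ) - r - 1)) t r := by
  rw [show (∏ j ∈ Icc 1 r, (1 - a * b * t ^ (2*(n:ℤ) - j - n - 1)))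
      = ∏ j ∈ Icc 1 r, (1 - a * b * t ^ (((n:ℤ) - 1) - j)) from
    prod_argZ (fun m => 1 - a * b * t ^ m) fun j _ => by ring]
  rw [Licc_int (fun m => 1 - a * b * t ^ m) ((n:ℤ) - 1) r]
  unfold qPoch
  refine Finset.prod_congr rfl fun i _ => ?_
  conv_rhs => rw [← zpow_natCast t i, mul_assoc, ← zpow_add₀ ht]
  congr 3
  omega

lemma qp_ab2 (ht : t ≠ 0) (n r : ℕ) (hrn : r ≤ n) :
    qPoch (a * b * t ^ (2*n - r)) t r =
      ∏ i ∈ range r, (1 - a * b * t ^ ((2*(n:ℤ) - r - r - 1) + r + 1 + i)) := by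
  unfold qPoch
  refine Finset.prod_congr rfl fun i _ => ?_
  rw [mul_assoc, ← pow_add, ← zpow_natCast t (2*n - r + i)]
  congr 3
  omega

lemma qp_b_ne (hb : ∀ m : ℕ, (1 : F) - b * t ^ m ≠ 0) (n r : ℕ) :
    qPoch (b * t ^ (n - r)) t r ≠ 0 := by
  unfold qPoch
  rw [Finset.prod_ne_zero_iff]
  intro i _
  rw [mul_assoc, ← pow_add]
  exact hb _

lemma qp_t_ne (ht1 : ∀ m : ℕ, 1 ≤ m → (1 : F) - t ^ m ≠ 0) (r : ℕ) :
    qPoch t t r ≠ 0 := by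
  unfold qPoch
  rw [Finset.prod_ne_zero_iff]
  intro i _
  rw [show t * t ^ i = t ^ (i + 1) from (pow_succ' t i).symm.trans (by ring)]
  exact ht1 _ (by omega)

lemma qp_ab1_ne (ht : t ≠ 0) (hab : ∀ m : ℤ, (1 : F) - a * b * t ^ m ≠ 0) (n r : ℕ) :
    qPoch (a * b * t ^ ((n:ℤ) - r - 1)) t r ≠ 0 := by
  unfold qPoch
  rw [Finset.prod_ne_zero_iff]
  intro i _
  rw [← zpow_natCast t i, mul_assoc, ← zpow_add₀ ht]
  exact hab _

end Helpers

/-- the fundamental-partition specialization `λ = ω_r` of the p-adic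
generalized dimension formula:
`a^{-r} t^{r(r+1-2n)} ∏_{i=1}^r v_i ∏_{1≤j<k≤r} W_{jk} ∏_{j=1}^r ∏_{k=r+1}^n w⁺_{jk} w⁻_{jk}
 = ((t^{n+1-r};t)_r (a t^{n-r};t)_r (ab t^{2n-r};t)_r)/((t;t)_r (b t^{n-r};t)_r (ab t^{n-r-1};t)_r)
   ⬝ (1-ab t^{2n-2r-1})/(1-ab t^{2n-1}) ⬝ a^{-r} t^{r(r+1-2n)}`. -/
theorem D0_fundamental_partition {F : Type*} [Field F] (a b t : F)
    (ha : a ≠ 0) (ht : t ≠ 0) (n r : ℕ) (hrn : r ≤ n)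
    (hb : ∀ m : ℕ, (1 : F) - b * t ^ m ≠ 0)
    (hab : ∀ m : ℤ, (1 : F) - a * b * t ^ m ≠ 0)
    (ht1 : ∀ m : ℕ, 1 ≤ m → (1 : F) - t ^ m ≠ 0) :
    a ^ (-(r : ℤ)) * t ^ ((r : ℤ) * ((r : ℤ) + 1 - 2 * n)) *
      (∏ i ∈ Finset.Icc 1 r,
        (1 - a * t ^ (n - i)) / (1 - b * t ^ (n - i)) * t ^ ((i : ℤ) - n)) *
      (∏ j ∈ Finset.Icc 1 r, ∏ k ∈ Finset.Icc (j + 1) r,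
        t * (1 - a * b * t ^ (2 * (n : ℤ) - j - k + 1)) /
          (1 - a * b * t ^ (2 * (n : ℤ) - j - k - 1))) *
      (∏ j ∈ Finset.Icc 1 r, ∏ k ∈ Finset.Icc (r + 1) n,
        (t * (1 - a * b * t ^ (2 * (n : ℤ) - j - k)) /
            (1 - a * b * t ^ (2 * (n : ℤ) - j - k - 1))) *
          ((1 - t ^ (k - j + 1)) / (1 - t ^ (k - j))))
      = qPoch (t ^ (n + 1 - r)) t r * qPoch (a * t ^ (n - r)) t r *
            qPoch (a * b * t ^ (2 * n - r)) t r /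
          (qPoch t t r * qPoch (b * t ^ (n - r)) t r *
            qPoch (a * b * t ^ ((n : ℤ) - r - 1)) t r) *
          ((1 - a * b * t ^ (2 * (n : ℤ) - 2 * r - 1)) /
            (1 - a * b * t ^ (2 * (n : ℤ) - 1))) *
          (a ^ (-(r : ℤ)) * t ^ ((r : ℤ) * ((r : ℤ) + 1 - 2 * n))) := by
  have h2 : (∏ j ∈ Finset.Icc 1 r, ∏ k ∈ Finset.Icc (j + 1) r,
        t * (1 - a * b * t ^ (2 * (n : ℤ) - j - k + 1)) /
          (1 - a * b * t ^ (2 * (n : ℤ) - j - k - 1)))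
      = ∏ j ∈ Icc 1 r, (t^(r-j) *
          ((1 - a*b*t^(2*(n:ℤ) - j - j)) * (1 - a*b*t^(2*(n:ℤ) - j - j - 1))) /
          ((1 - a*b*t^(2*(n:ℤ) - j - r)) * (1 - a*b*t^(2*(n:ℤ) - j - r - 1)))) :=
    Finset.prod_congr rfl fun j hj =>
      inner2 a b t hab (2*(n:ℤ) - j) j r (Finset.mem_Icc.mp hj).2
  have h3 : (∏ j ∈ Finset.Icc 1 r, ∏ k ∈ Finset.Icc (r + 1) n,
        (t * (1 - a * b * t ^ (2 * (n : ℤ) - j - k)) /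
            (1 - a * b * t ^ (2 * (n : ℤ) - j - k - 1))) *
          ((1 - t ^ (k - j + 1)) / (1 - t ^ (k - j))))
      = ∏ j ∈ Icc 1 r, (t^(n-r) *
          ((1 - a*b*t^(2*(n:ℤ) - j - r - 1)) / (1 - a*b*t^(2*(n:ℤ) - j - n - 1))) *
          ((1 - t^(n - j + 1)) / (1 - t^(r - j + 1)))) :=
    Finset.prod_congr rfl fun j hj =>
      inner3 a b t hab ht1 j (2*(n:ℤ) - j) r (Finset.mem_Icc.mp hj).2 n hrn
  have hsplit : ∀ j ∈ Icc 1 r,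
      ((1 - a * t ^ (n - j)) / (1 - b * t ^ (n - j)) * t ^ ((j : ℤ) - n)) *
      (t^(r-j) *
          ((1 - a*b*t^(2*(n:ℤ) - j - j)) * (1 - a*b*t^(2*(n:ℤ) - j - j - 1))) /
          ((1 - a*b*t^(2*(n:ℤ) - j - r)) * (1 - a*b*t^(2*(n:ℤ) - j - r - 1)))) *
      (t^(n-r) *
          ((1 - a*b*t^(2*(n:ℤ) - j - r - 1)) / (1 - a*b*t^(2*(n:ℤ) - j - n - 1))) *
          ((1 - t^(n - j + 1)) / (1 - t^(r - j + 1))))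
      = ((1 - a * t ^ (n - j)) *
          ((1 - a*b*t^(2*(n:ℤ) - 2*j)) * (1 - a*b*t^(2*(n:ℤ) - 2*j - 1))) *
          (1 - t^(n - j + 1))) /
        ((1 - b * t ^ (n - j)) * (1 - a*b*t^(2*(n:ℤ) - j - r)) *
          (1 - a*b*t^(2*(n:ℤ) - j - n - 1)) * (1 - t^(r - j + 1))) := by
    intro j hj
    obtain ⟨hj1, hjr⟩ := Finset.mem_Icc.mp hj
    rw [show (2*(n:ℤ) - j - j) = 2*(n:ℤ) - 2*j by ring]
    have hT : t ^ ((j:ℤ) - n) * t ^ (r - j) * t ^ (n - r) = 1 := by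
      rw [show ((t:F) ^ (r - j)) = t ^ ((r:ℤ) - j) by rw [← zpow_natCast]; congr 1; omega,
        show ((t:F) ^ (n - r)) = t ^ ((n:ℤ) - r) by rw [← zpow_natCast]; congr 1; omega,
        ← zpow_add₀ ht, ← zpow_add₀ ht,
        show ((j:ℤ) - n) + ((r:ℤ) - j) + ((n:ℤ) - r) = 0 by ring, zpow_zero]
    exact perterm_abstract _ _ _ _ _ _ _ _ _ _ _ _
      (hb (n - j)) (hab (2*(n:ℤ) - j - r)) (hab (2*(n:ℤ) - j - r - 1))
      (hab (2*(n:ℤ) - j - n - 1)) (ht1 (r - j + 1) (by omega)) hT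
  have hZ : (∏ j ∈ Icc 1 r, (1 - a*b*t^(2*(n:ℤ) - j - r)))
      = ∏ i ∈ range r, (1 - a*b*t^(2*(n:ℤ) - r - r + i)) := by
    rw [show (∏ j ∈ Icc 1 r, (1 - a*b*t^(2*(n:ℤ) - j - r)))
        = ∏ j ∈ Icc 1 r, (1 - a*b*t^((2*(n:ℤ) - r) - j)) from
      prod_argZ (fun m => 1 - a*b*t^m) fun j _ => by ring]
    exact Licc_int (fun m => 1 - a*b*t^m) (2*(n:ℤ) - r) r
  have hnum : (∏ j ∈ Icc 1 r, ((1 - a * t ^ (n - j)) *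
          ((1 - a*b*t^(2*(n:ℤ) - 2*j)) * (1 - a*b*t^(2*(n:ℤ) - 2*j - 1))) *
          (1 - t^(n - j + 1))))
      = qPoch (a * t ^ (n - r)) t r *
          (∏ i ∈ range (r + r), (1 - a*b*t^(2*(n:ℤ) - r - r - 1 + i))) *
          qPoch (t ^ (n + 1 - r)) t r := by
    rw [Finset.prod_mul_distrib, Finset.prod_mul_distrib, qp_a a t n r hrn, qp_t1 t n r hrn,
      Lpair (fun m => 1 - a*b*t^m) (2*(n:ℤ)) r]
  have hden : (∏ j ∈ Icc 1 r, ((1 - b * t ^ (n - j)) * (1 - a*b*t^(2*(n:ℤ) - j - r)) *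
          (1 - a*b*t^(2*(n:ℤ) - j - n - 1)) * (1 - t^(r - j + 1))))
      = qPoch (b * t ^ (n - r)) t r *
          (∏ i ∈ range r, (1 - a*b*t^(2*(n:ℤ) - r - r + i))) *
          qPoch (a * b * t ^ ((n : ℤ) - r - 1)) t r * qPoch t t r := by
    rw [Finset.prod_mul_distrib, Finset.prod_mul_distrib, Finset.prod_mul_distrib,
      qp_b b t n r hrn, qp_t2 t r, qp_ab1 a b t ht n r, hZ]
  have htel : (∏ i ∈ range (r + r), (1 - a*b*t^(2*(n:ℤ) - r - r - 1 + i))) *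
        (1 - a*b*t^(2*(n:ℤ) - r - r - 1 + r + r))
      = (1 - a*b*t^(2*(n:ℤ) - r - r - 1)) *
        (∏ i ∈ range r, (1 - a*b*t^(2*(n:ℤ) - r - r - 1 + 1 + i))) *
        ∏ i ∈ range r, (1 - a*b*t^(2*(n:ℤ) - r - r - 1 + r + 1 + i)) :=
    Ltel (fun m => 1 - a*b*t^m) (2*(n:ℤ) - r - r - 1) r
  rw [show (∏ i ∈ range r, (1 - a*b*t^(2*(n:ℤ) - r - r - 1 + 1 + i)))
      = ∏ i ∈ range r, (1 - a*b*t^(2*(n:ℤ) - r - r + i)) from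
    prod_argZ (fun m => 1 - a*b*t^m) fun i _ => by ring] at htel
  have key : (∏ i ∈ Finset.Icc 1 r,
        (1 - a * t ^ (n - i)) / (1 - b * t ^ (n - i)) * t ^ ((i : ℤ) - n)) *
      (∏ j ∈ Finset.Icc 1 r, ∏ k ∈ Finset.Icc (j + 1) r,
        t * (1 - a * b * t ^ (2 * (n : ℤ) - j - k + 1)) /
          (1 - a * b * t ^ (2 * (n : ℤ) - j - k - 1))) *
      (∏ j ∈ Finset.Icc 1 r, ∏ k ∈ Finset.Icc (r + 1) n,
        (t * (1 - a * b * t ^ (2 * (n : ℤ) - j - k)) /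
            (1 - a * b * t ^ (2 * (n : ℤ) - j - k - 1))) *
          ((1 - t ^ (k - j + 1)) / (1 - t ^ (k - j))))
      = qPoch (t ^ (n + 1 - r)) t r * qPoch (a * t ^ (n - r)) t r *
            qPoch (a * b * t ^ (2 * n - r)) t r /
          (qPoch t t r * qPoch (b * t ^ (n - r)) t r *
            qPoch (a * b * t ^ ((n : ℤ) - r - 1)) t r) *
          ((1 - a * b * t ^ (2 * (n : ℤ) - 2 * r - 1)) /
            (1 - a * b * t ^ (2 * (n : ℤ) - 1))) := by
    rw [h2, h3, ← Finset.prod_mul_distrib, ← Finset.prod_mul_distrib,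
      Finset.prod_congr rfl hsplit, Finset.prod_div_distrib, hnum, hden,
      qp_ab2 a b t ht n r hrn]
    have k1 := qp_b_ne b t hb n r
    have k2 := qp_t_ne t ht1 r
    have k3 := qp_ab1_ne a b t ht hab n r
    have k4 : (∏ i ∈ range r, (1 - a*b*t^(2*(n:ℤ) - r - r + i))) ≠ 0 := by
      rw [Finset.prod_ne_zero_iff]; intro i _; exact hab _
    have k6 := hab (2*(n:ℤ) - 1)
    rw [div_mul_div_comm, div_eq_div_iff
      (mul_ne_zero (mul_ne_zero (mul_ne_zero k1 k4) k3) k2)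
      (mul_ne_zero (mul_ne_zero (mul_ne_zero k2 k1) k3) k6)]
    linear_combination (norm := ring_nf)
      (qPoch (a * t ^ (n - r)) t r * qPoch (t ^ (n + 1 - r)) t r * qPoch t t r *
        qPoch (b * t ^ (n - r)) t r * qPoch (a * b * t ^ ((n:ℤ) - r - 1)) t r) * htel
  linear_combination (a ^ (-(r : ℤ)) * t ^ ((r : ℤ) * ((r : ℤ) + 1 - 2 * (n:ℤ)))) * key
end

section
/- For integers 1 \leq r \leq d and t \neq 0, 1 in a field, the identity t^{r(r-d)} (t^{d-r+2}; t)_r (1 - t^{d-2r+1}) / ((t;t)_r (1 - t^{d+1})) = \binom{d}{r}_{t^{-1}} - \binom{d}{r-1}_{t^{-1}} holds, where \binom{d}{r}_s = [d]_s!/([r]_s! [d-r]_s!) is the Gaussian binomial coefficient in base s. -/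
/-- The s-factorial `[m]_s! = ∏_{j=1}^m (1-s^j)/(1-s)`. -/
noncomputable def qFact {F : Type*} [Field F] (s : F) (m : ℕ) : F :=
  ∏ j ∈ Finset.range m, (1 - s ^ (j + 1)) / (1 - s)

/-- The Gaussian binomial coefficient `(d r)_s = [d]_s!/([r]_s! [d-r]_s!)`. -/
noncomputable def qBinom {F : Type*} [Field F] (s : F) (d r : ℕ) : F :=
  qFact s d / (qFact s r * qFact s (d - r))

open Finset

lemma Finset.sum_range_id_add (a b : ℕ) :
    ∑ i ∈ range (a + b), i = ∑ i ∈ range a, i + ∑ i ∈ range b, i + a * b := by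
  rw [sum_range_add, sum_add_distrib, sum_const, card_range, smul_eq_mul]
  ring

section QAnalogues

variable {F : Type*} [Field F]

lemma qPoch_add (x t : F) (a b : ℕ) :
    qPoch x t (a + b) = qPoch x t a * qPoch (x * t ^ a) t b := by
  simp only [qPoch, prod_range_add, pow_add, mul_assoc]

lemma qPoch_self_succ (t : F) (n : ℕ) : qPoch t t (n + 1) = qPoch t t n * (1 - t ^ (n + 1)) := by
  rw [qPoch, prod_range_succ, ← pow_succ']
  rfl

lemma qPoch_self_mul_shift (t : F) (a b : ℕ) :
    qPoch t t a * qPoch (t ^ (a + 1)) t b = qPoch t t (a + b) := by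
  rw [qPoch_add, pow_succ']

lemma qPoch_self_ne_zero {t : F} (ht : ∀ m : ℕ, 1 ≤ m → t ^ m ≠ 1) (n : ℕ) :
    qPoch t t n ≠ 0 :=
  prod_ne_zero_iff.mpr fun i _ =>
    sub_ne_zero.mpr fun h => ht (i + 1) i.succ_pos (by rw [pow_succ']; exact h.symm)

lemma qFact_inv {t : F} (ht0 : t ≠ 0) (ht1 : t ≠ 1) (n : ℕ) :
    qFact t⁻¹ n = qPoch t t n / (t ^ (∑ i ∈ range n, i) * (1 - t) ^ n) := by
  have h1 : 1 - t ≠ 0 := sub_ne_zero.mpr (Ne.symm ht1)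
  rw [qFact, qPoch, ← prod_pow_eq_pow_sum, pow_eq_prod_const, ← prod_mul_distrib,
    ← prod_div_distrib]
  refine prod_congr rfl fun i _ => ?_
  rw [inv_pow]
  field_simp
  ring

lemma qBinom_inv_add {t : F} (ht0 : t ≠ 0) (ht1 : t ≠ 1) (a b : ℕ) :
    qBinom t⁻¹ (a + b) a = qPoch t t (a + b) / (t ^ (a * b) * (qPoch t t a * qPoch t t b)) := by
  have h1 : 1 - t ≠ 0 := sub_ne_zero.mpr (Ne.symm ht1)
  rw [qBinom, Nat.add_sub_cancel_left, qFact_inv ht0 ht1, qFact_inv ht0 ht1, qFact_inv ht0 ht1,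
    sum_range_id_add]
  field_simp
  ring

end QAnalogues

/-- for `1 ≤ r ≤ d`,
`t^{r(r-d)} (t^{d-r+2};t)_r (1-t^{d-2r+1})/((t;t)_r (1-t^{d+1}))
  = (d r)_{t⁻¹} - (d r-1)_{t⁻¹}`. -/
theorem dim_fundamental_padic {F : Type*} [Field F] (t : F) (ht0 : t ≠ 0)
    (ht : ∀ m : ℕ, 1 ≤ m → t ^ m ≠ 1) (d r : ℕ) (hr : 1 ≤ r) (hrd : r ≤ d) :
    t ^ ((r : ℤ) * ((r : ℤ) - d)) * qPoch (t ^ (d - r + 2)) t r *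
        (1 - t ^ ((d : ℤ) - 2 * r + 1)) / (qPoch t t r * (1 - t ^ (d + 1)))
      = qBinom t⁻¹ d r - qBinom t⁻¹ d (r - 1) := by
  obtain ⟨k, rfl⟩ : ∃ k, d = r + k := ⟨d - r, by omega⟩
  obtain ⟨m, rfl⟩ : ∃ m, r = m + 1 := ⟨r - 1, by omega⟩
  have ht1 : t ≠ 1 := fun h => ht 1 le_rfl (by rw [pow_one, h])
  have hP := qPoch_self_ne_zero ht
  have hsub (n : ℕ) : 1 - t ^ (n + 1) ≠ 0 := sub_ne_zero.mpr (ht (n + 1) n.succ_pos).symm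
  have hshift : qPoch (t ^ (k + 2)) t (m + 1) = qPoch t t (m + 1 + k + 1) / qPoch t t (k + 1) := by
    rw [eq_div_iff (hP _), mul_comm, qPoch_self_mul_shift]
    congr 1
    omega
  have hexp₁ : ((m + 1 : ℕ) : ℤ) * (((m + 1 : ℕ) : ℤ) - ((m + 1 + k : ℕ) : ℤ)) =
      -(((m + 1) * k : ℕ) : ℤ) := by push_cast; ring
  have hexp₂ : ((m + 1 + k : ℕ) : ℤ) - 2 * ((m + 1 : ℕ) : ℤ) + 1 = (k : ℤ) - (m : ℤ) := by
    push_cast; ring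
  have hbinom : qBinom t⁻¹ (m + 1 + k) m =
      qPoch t t (m + 1 + k) / (t ^ (m * (k + 1)) * (qPoch t t m * qPoch t t (k + 1))) := by
    rw [show m + 1 + k = m + (k + 1) by omega, qBinom_inv_add ht0 ht1]
  rw [hexp₁, hexp₂, zpow_neg, zpow_natCast, zpow_sub₀ ht0, zpow_natCast, zpow_natCast,
    Nat.add_sub_cancel_left, hshift, Nat.add_sub_cancel, hbinom, qBinom_inv_add ht0 ht1,
    qPoch_self_succ t (m + 1 + k), qPoch_self_succ t m, qPoch_self_succ t k]
  field_simp [hP m, hP k, hP (m + 1 + k), hsub m, hsub k, hsub (m + 1 + k)]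
  ring
end
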